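/- Let X_1,…,X_{T0} be i.i.d. random matrices in ℝ^{d1×d2} with ‖X_i‖_F ≤ 1 almost surely, and let Σ = E[vec(X₁)·vec(X₁)ᵀ]. Let Θ* ∈ ℝ^{d1×d2} have rank r, with U its column space and V its row space; let M̄^⊥ be the subspace of matrices whose row space is contained in V^⊥ and column space in U^⊥, M̄ its orthogonal complement with respect to the trace inner product, and ℂ = {Δ ∈ ℝ^{d1×d2} : ‖Δ_{M̄^⊥}‖_nuc ≤ 3‖Δ_{M̄}‖_nuc}, where Δ_N is trace-orthogonal projection onto N. Suppose α0 > 0 satisfies vec(Δ)ᵀΣ·vec(Δ) ≥ α0‖Δ‖_F² for all Δ ∈ ℂ, and let C(d1,d2) = (√(α0/(4√(d1d2)) + 1) − 1)². Then for every T0 ≥ 2·log(d1²d2² + d1d2)/C(d1,d2), with probability at least 1 − exp(−T0·C(d1,d2)/4), it holds simultaneously for all Δ ∈ ℂ that (1/(2T0))·Σ_{i=1}^{T0} ⟨X_i, Δ⟩² ≥ (α0/4)·‖Δ‖_F². -/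

import Mathlib

noncomputable section
open MeasureTheory ProbabilityTheory

instance matrixMeasurableSpace {m n : Type*} : MeasurableSpace (Matrix m n ℝ) :=
  MeasurableSpace.pi

/-- Trace inner product ⟨A, B⟩ = trace(AᵀB). -/
def frobInner {m n : Type*} [Fintype m] [Fintype n]
    (A B : Matrix m n ℝ) : ℝ := ∑ i, ∑ j, A i j * B i j

/-- Frobenius norm. -/
def frobNorm {m n : Type*} [Fintype m] [Fintype n] (A : Matrix m n ℝ) : ℝ :=
  Real.sqrt (∑ i, ∑ j, (A i j) ^ 2)

/-- Nuclear norm = sum of the singular values (square roots of the eigenvalues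
of AᵀA). -/
def nucNorm {d1 d2 : ℕ} (A : Matrix (Fin d1) (Fin d2) ℝ) : ℝ :=
  ∑ j, Real.sqrt ((Matrix.isHermitian_conjTranspose_mul_self A).eigenvalues j)

/-- Row space of a matrix: the span of its rows in ℝ^{d2}. -/
def rowSpace {d1 d2 : ℕ} (A : Matrix (Fin d1) (Fin d2) ℝ) :
    Submodule ℝ (EuclideanSpace ℝ (Fin d2)) :=
  Submodule.span ℝ (Set.range fun i => (WithLp.toLp 2 (fun j => A i j) : EuclideanSpace ℝ (Fin d2)))

/-- Column space of a matrix: the span of its columns in ℝ^{d1}. -/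
def colSpace {d1 d2 : ℕ} (A : Matrix (Fin d1) (Fin d2) ℝ) :
    Submodule ℝ (EuclideanSpace ℝ (Fin d1)) :=
  Submodule.span ℝ (Set.range fun j => (WithLp.toLp 2 (fun i => A i j) : EuclideanSpace ℝ (Fin d1)))

/-- The subspace M̄⊥ associated with `Θstar`: matrices whose row space is
contained in V⊥ and whose column space is contained in U⊥, where U and V are
the column and row spaces of `Θstar`. -/
def MbarPerp {d1 d2 : ℕ} (Θstar : Matrix (Fin d1) (Fin d2) ℝ) :
    Set (Matrix (Fin d1) (Fin d2) ℝ) :=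
  {Δ | rowSpace Δ ≤ (rowSpace Θstar)ᗮ ∧ colSpace Δ ≤ (colSpace Θstar)ᗮ}

/-!
Put `Y_i = vec X_i` and `G = Σ_i Y_i Y_iᵀ`, so that `Σ_i ⟨X_i, Δ⟩² = vec(Δ)ᵀ G vec(Δ)` and
`E G = T₀ Σ`. Each entry of `G` is a sum of `T₀` i.i.d. terms bounded by `1`, so by Bernstein's
inequality it leaves `[T₀ Σ_ab - T₀ θ_ab, T₀ Σ_ab + T₀ θ_ab]` with probability at most
`2 exp(-5 T₀ u² / 4)`, where `u² = C(d₁, d₂)` and the threshold `θ_ab ≈ u √Var(Y_a Y_b) + u²`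
adapts to the variance of the entry. These variances sum to at most `E ‖X‖_F⁴ ≤ 1`, which gives
`‖θ‖_F ≤ α₀ / 2`, and a union bound over the `(d₁ d₂)²` entries together with the lower bound on
`T₀` leaves probability `1 - exp(-T₀ u² / 4)`. On this event
`|vec(Δ)ᵀ (G - T₀ Σ) vec(Δ)| ≤ T₀ ‖θ‖_F ‖Δ‖_F² ≤ T₀ α₀ ‖Δ‖_F² / 2`, and the restricted eigenvalue
condition `vec(Δ)ᵀ Σ vec(Δ) ≥ α₀ ‖Δ‖_F²` finishes the proof.
Since `vec(Δ)ᵀ Σ vec(Δ) ≤ ‖Δ‖_F²`, a cone containing a nonzero matrix forces `α₀ ≤ 1`, which the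
bound on `‖θ‖_F` needs.
-/

open Real

section Bernstein

variable {Ω : Type*} [MeasurableSpace Ω] {μ : Measure Ω} [IsProbabilityMeasure μ]

lemma integrable_exp_mul_of_abs_le {Z : Ω → ℝ} {C l : ℝ} (hZ : Measurable Z)
    (hb : ∀ᵐ ω ∂μ, |Z ω| ≤ C) (hlC : |l| * C ≤ 1) :
    Integrable (fun ω => exp (l * Z ω)) μ := by
  refine .of_bound (hZ.const_mul l).exp.aestronglyMeasurable (exp 1) ?_
  filter_upwards [hb] with ω h
  rw [norm_of_nonneg (exp_pos _).le, exp_le_exp]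
  calc l * Z ω ≤ |l| * |Z ω| := by rw [← abs_mul]; exact le_abs_self _
    _ ≤ |l| * C := by gcongr
    _ ≤ 1 := hlC

lemma mgf_le_exp_mul_variance {Z : Ω → ℝ} {C l : ℝ} (hZ : Measurable Z)
    (hb : ∀ᵐ ω ∂μ, |Z ω| ≤ C) (hlC : |l| * C ≤ 1) (hmean : μ[Z] = 0) :
    mgf Z μ l ≤ exp (l ^ 2 * variance Z μ) := by
  have hZ2 : MemLp Z 2 μ :=
    (memLp_top_of_bound hZ.aestronglyMeasurable C (by simpa using hb)).mono_exponent le_top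
  have hexp : ∀ᵐ ω ∂μ, exp (l * Z ω) ≤ 1 + l * Z ω + l ^ 2 * Z ω ^ 2 := by
    filter_upwards [hb] with ω h
    have hlZ : |l * Z ω| ≤ 1 := by
      rw [abs_mul]; exact (mul_le_mul_of_nonneg_left h (abs_nonneg l)).trans hlC
    have := (abs_le.mp (abs_exp_sub_one_sub_id_le hlZ)).2
    linarith [mul_pow l (Z ω) 2]
  have hint : Integrable (fun ω => 1 + l * Z ω) μ :=
    (integrable_const 1).add ((hZ2.integrable one_le_two).const_mul l)
  calc mgf Z μ l ≤ ∫ ω, 1 + l * Z ω + l ^ 2 * Z ω ^ 2 ∂μ :=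
        integral_mono_ae (integrable_exp_mul_of_abs_le hZ hb hlC)
          (hint.add (hZ2.integrable_sq.const_mul _)) hexp
    _ = 1 + l ^ 2 * variance Z μ := by
        rw [integral_add hint (hZ2.integrable_sq.const_mul _),
          integral_add (integrable_const 1) ((hZ2.integrable one_le_two).const_mul l),
          integral_const_mul, integral_const_mul, hmean,
          variance_of_integral_eq_zero hZ.aemeasurable hmean]
        simp
    _ ≤ exp (l ^ 2 * variance Z μ) := by linarith [add_one_le_exp (l ^ 2 * variance Z μ)]

variable {ι : Type*} [Fintype ι] {Z : ι → Ω → ℝ}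

lemma measureReal_le_sum_le_exp (hind : iIndepFun Z μ) (hZ : ∀ i, Measurable (Z i))
    {C l σ2 : ℝ} (hb : ∀ i, ∀ᵐ ω ∂μ, |Z i ω| ≤ C) (hmean : ∀ i, μ[Z i] = 0)
    (hvar : ∀ i, variance (Z i) μ ≤ σ2) (hl : 0 ≤ l) (hlC : l * C ≤ 1) (t : ℝ) :
    μ.real {ω | Fintype.card ι * t ≤ ∑ i, Z i ω} ≤
      exp (Fintype.card ι * (l ^ 2 * σ2 - l * t)) := by
  have hlC' : |l| * C ≤ 1 := by rwa [abs_of_nonneg hl]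
  have hmgf : ∀ i, mgf (Z i) μ l ≤ exp (l ^ 2 * σ2) := fun i =>
    (mgf_le_exp_mul_variance (hZ i) (hb i) hlC' (hmean i)).trans
      (exp_le_exp.mpr (by gcongr; exact hvar i))
  calc μ.real {ω | Fintype.card ι * t ≤ ∑ i, Z i ω}
      = μ.real {ω | Fintype.card ι * t ≤ (∑ i, Z i) ω} := by simp only [Finset.sum_apply]
    _ ≤ exp (-l * (Fintype.card ι * t)) * mgf (∑ i, Z i) μ l :=
        measure_ge_le_exp_mul_mgf _ hl (hind.integrable_exp_mul_sum hZ
          fun i _ => integrable_exp_mul_of_abs_le (hZ i) (hb i) hlC')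
    _ = exp (-l * (Fintype.card ι * t)) * ∏ i, mgf (Z i) μ l := by rw [hind.mgf_sum hZ]
    _ ≤ exp (-l * (Fintype.card ι * t)) * ∏ _i : ι, exp (l ^ 2 * σ2) := by
        gcongr with i
        exacts [fun i _ => mgf_nonneg, hmgf i]
    _ = exp (Fintype.card ι * (l ^ 2 * σ2 - l * t)) := by
        rw [Finset.prod_const, ← exp_nat_mul, ← exp_add, Finset.card_univ]
        ring_nf

/-- Bernstein's inequality: the hypotheses on `κ` say `κ ≤ min (t / 4) (t ^ 2 / (4 σ2))`. -/
lemma measureReal_le_sum_le_exp_neg (hind : iIndepFun Z μ) (hZ : ∀ i, Measurable (Z i))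
    {σ2 t κ : ℝ} (hb : ∀ i, ∀ᵐ ω ∂μ, |Z i ω| ≤ 2) (hmean : ∀ i, μ[Z i] = 0)
    (hvar : ∀ i, variance (Z i) μ ≤ σ2) (ht : 0 < t) (hκt : 4 * κ ≤ t)
    (hκσ : 4 * σ2 * κ ≤ t ^ 2) :
    μ.real {ω | Fintype.card ι * t ≤ ∑ i, Z i ω} ≤ exp (-(Fintype.card ι * κ)) := by
  have hcard : (0 : ℝ) ≤ Fintype.card ι := Nat.cast_nonneg _
  rcases le_or_gt t σ2 with htσ | hσt
  · have hσ : 0 < σ2 := ht.trans_le htσ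
    refine (measureReal_le_sum_le_exp hind hZ hb hmean hvar (l := t / (2 * σ2))
      (by positivity) ?_ t).trans (exp_le_exp.mpr ?_)
    · rw [div_mul_eq_mul_div, div_le_one (by positivity)]; linarith
    · have hκ : κ ≤ t ^ 2 / (4 * σ2) := by rw [le_div_iff₀ (by positivity)]; linarith
      have : (t / (2 * σ2)) ^ 2 * σ2 - t / (2 * σ2) * t = -(t ^ 2 / (4 * σ2)) := by
        field_simp; ring
      rw [this]; nlinarith
  · refine (measureReal_le_sum_le_exp hind hZ hb hmean hvar (l := 1 / 2)
      (by norm_num) (by norm_num) t).trans (exp_le_exp.mpr ?_)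
    nlinarith

variable {E : Type*} [MeasurableSpace E] {X : ι → Ω → E}

lemma measureReal_le_abs_sum_sub_le_two_mul_exp (hX : ∀ i, Measurable (X i))
    (hind : iIndepFun X μ) (hid : ∀ i j, IdentDistrib (X i) (X j) μ μ) {f : E → ℝ}
    (hf : Measurable f) (hfb : ∀ i, ∀ᵐ ω ∂μ, |f (X i ω)| ≤ 1) (i₀ : ι) {t κ : ℝ} (ht : 0 < t)
    (hκt : 4 * κ ≤ t) (hκσ : 4 * variance (fun ω => f (X i₀ ω)) μ * κ ≤ t ^ 2) :
    μ.real {ω | Fintype.card ι * t ≤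
        |∑ i, f (X i ω) - Fintype.card ι * μ[fun ω => f (X i₀ ω)]|} ≤
      2 * exp (-(Fintype.card ι * κ)) := by
  set m := μ[fun ω => f (X i₀ ω)]
  have hfX : ∀ i, Measurable fun ω => f (X i ω) := fun i => hf.comp (hX i)
  have hint : ∀ i, Integrable (fun ω => f (X i ω)) μ := fun i =>
    .of_bound (hfX i).aestronglyMeasurable 1 (by simpa using hfb i)
  have hid₀ : ∀ i, IdentDistrib (fun ω => f (X i ω)) (fun ω => f (X i₀ ω)) μ μ := fun i =>
    (hid i i₀).comp hf
  have hm : |m| ≤ 1 := by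
    simpa using norm_integral_le_of_norm_le_const (μ := μ) (f := fun ω => f (X i₀ ω)) (C := 1)
      (by simpa using hfb i₀)
  have one_sided : ∀ s : ℝ, |s| = 1 → μ.real {ω | Fintype.card ι * t ≤
      s * (∑ i, f (X i ω) - Fintype.card ι * m)} ≤ exp (-(Fintype.card ι * κ)) := by
    intro s hs
    have hZ : ∀ i, Measurable fun ω => s * (f (X i ω) - m) := fun i =>
      ((hfX i).sub_const m).const_mul s
    have hsum : ∀ ω, ∑ i, s * (f (X i ω) - m) = s * (∑ i, f (X i ω) - Fintype.card ι * m) := by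
      intro ω
      rw [← Finset.mul_sum, Finset.sum_sub_distrib, Finset.sum_const, Finset.card_univ,
        nsmul_eq_mul]
    simp_rw [← hsum]
    refine measureReal_le_sum_le_exp_neg (Z := fun i ω => s * (f (X i ω) - m))
      (hind.comp (fun _ x => s * (f x - m)) fun _ => (hf.sub_const m).const_mul s) hZ
      (fun i => ?_) (fun i => ?_) (fun i => ?_) ht hκt hκσ
    · filter_upwards [hfb i] with ω h
      rw [abs_mul, hs, one_mul]
      linarith [abs_sub (f (X i ω)) m]
    · have hmi : ∫ ω, f (X i ω) ∂μ = m := (hid₀ i).integral_eq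
      rw [integral_const_mul, integral_sub (hint i) (integrable_const m), hmi]
      simp
    · rw [variance_const_mul, variance_sub_const (hfX i).aestronglyMeasurable, ← sq_abs, hs,
        one_pow, one_mul, (hid₀ i).variance_eq]
  calc μ.real {ω | Fintype.card ι * t ≤ |∑ i, f (X i ω) - Fintype.card ι * m|}
      ≤ μ.real ({ω | Fintype.card ι * t ≤ 1 * (∑ i, f (X i ω) - Fintype.card ι * m)} ∪
          {ω | Fintype.card ι * t ≤ -1 * (∑ i, f (X i ω) - Fintype.card ι * m)}) :=
        measureReal_mono fun ω h => by simpa [le_abs] using h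
    _ ≤ 2 * exp (-(Fintype.card ι * κ)) := by
        refine (measureReal_union_le _ _).trans ?_
        linarith [one_sided 1 (by simp), one_sided (-1) (by simp)]

end Bernstein

section Quadratic

variable {α : Type*} [Fintype α]

lemma abs_le_one_of_sum_sq_le_one {v : α → ℝ} (hv : ∑ a, v a ^ 2 ≤ 1) (a : α) : |v a| ≤ 1 := by
  have := (Finset.single_le_sum (fun b _ => sq_nonneg (v b)) (Finset.mem_univ a)).trans hv
  rwa [← sq_abs, sq_le_one_iff₀ (abs_nonneg _)] at this

lemma abs_mul_le_one_of_sum_sq_le_one {v : α → ℝ} (hv : ∑ a, v a ^ 2 ≤ 1) (a b : α) :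
    |v a * v b| ≤ 1 := by
  rw [abs_mul]
  exact mul_le_one₀ (abs_le_one_of_sum_sq_le_one hv a) (abs_nonneg _)
    (abs_le_one_of_sum_sq_le_one hv b)

lemma abs_sum_sum_mul_mul_le {M θ : α → α → ℝ} (hM : ∀ a b, |M a b| ≤ θ a b) (D : α → ℝ) :
    |∑ a, ∑ b, D a * M a b * D b| ≤ (∑ a, D a ^ 2) * √(∑ a, ∑ b, θ a b ^ 2) := by
  have hDD : ∑ p : α × α, |D p.1 * D p.2| ^ 2 = (∑ a, D a ^ 2) ^ 2 := by
    simp_rw [sq_abs, mul_pow, Fintype.sum_prod_type, ← Finset.mul_sum, ← Finset.sum_mul, sq]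
  calc |∑ a, ∑ b, D a * M a b * D b|
      ≤ ∑ p : α × α, |D p.1 * D p.2| * θ p.1 p.2 := by
        rw [Fintype.sum_prod_type]
        refine (Finset.abs_sum_le_sum_abs _ _).trans (Finset.sum_le_sum fun a _ => ?_)
        refine (Finset.abs_sum_le_sum_abs _ _).trans (Finset.sum_le_sum fun b _ => ?_)
        rw [mul_right_comm, abs_mul]
        exact mul_le_mul_of_nonneg_left (hM a b) (abs_nonneg _)
    _ ≤ √(∑ p : α × α, |D p.1 * D p.2| ^ 2) * √(∑ p : α × α, θ p.1 p.2 ^ 2) :=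
        Real.sum_mul_le_sqrt_mul_sqrt _ _ _
    _ = (∑ a, D a ^ 2) * √(∑ a, ∑ b, θ a b ^ 2) := by
        rw [hDD, Real.sqrt_sq (Finset.sum_nonneg fun a _ => sq_nonneg _), Fintype.sum_prod_type]

lemma sum_sq_sum_mul_eq {ι : Type*} [Fintype ι] (y : ι → α → ℝ) (D : α → ℝ) :
    ∑ i, (∑ a, y i a * D a) ^ 2 = ∑ a, ∑ b, D a * (∑ i, y i a * y i b) * D b := by
  simp_rw [sq, Finset.sum_mul_sum, Finset.mul_sum, Finset.sum_mul]
  rw [Finset.sum_comm]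
  refine Finset.sum_congr rfl fun a _ => ?_
  rw [Finset.sum_comm]
  exact Finset.sum_congr rfl fun b _ => Finset.sum_congr rfl fun i _ => by ring

lemma sum_sq_sum_mul_ge {ι : Type*} [Fintype ι] {y : ι → α → ℝ} {Sig θ : α → α → ℝ} {n β : ℝ}
    (hn : 0 ≤ n) (hG : ∀ a b, |∑ i, y i a * y i b - n * Sig a b| ≤ n * θ a b)
    (hθ : √(∑ a, ∑ b, θ a b ^ 2) ≤ β) (D : α → ℝ) :
    n * (∑ a, ∑ b, D a * Sig a b * D b) - n * β * ∑ a, D a ^ 2 ≤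
      ∑ i, (∑ a, y i a * D a) ^ 2 := by
  have hdev := abs_sum_sum_mul_mul_le (M := fun a b => ∑ i, y i a * y i b - n * Sig a b) hG D
  have hsplit : ∑ a, ∑ b, D a * (∑ i, y i a * y i b - n * Sig a b) * D b =
      ∑ i, (∑ a, y i a * D a) ^ 2 - n * ∑ a, ∑ b, D a * Sig a b * D b := by
    rw [sum_sq_sum_mul_eq, Finset.mul_sum, ← Finset.sum_sub_distrib]
    refine Finset.sum_congr rfl fun a _ => ?_
    rw [Finset.mul_sum, ← Finset.sum_sub_distrib]
    exact Finset.sum_congr rfl fun b _ => by ring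
  have hθn : √(∑ a, ∑ b, (n * θ a b) ^ 2) ≤ n * β := by
    simp_rw [mul_pow, ← Finset.mul_sum]
    rw [Real.sqrt_mul (sq_nonneg n), Real.sqrt_sq hn]
    exact mul_le_mul_of_nonneg_left hθ hn
  rw [hsplit] at hdev
  have := (abs_le.mp hdev).1
  have hD : 0 ≤ ∑ a, D a ^ 2 := Finset.sum_nonneg fun a _ => sq_nonneg _
  nlinarith [mul_le_mul_of_nonneg_left hθn hD]

end Quadratic

section SecondMoment

variable {Ω : Type*} [MeasurableSpace Ω] {μ : Measure Ω} [IsProbabilityMeasure μ]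
  {α : Type*} [Fintype α] {Y : Ω → α → ℝ}

lemma sum_integral_le_of_ae_sum_le {ι : Type*} [Fintype ι] {g : ι → Ω → ℝ}
    (hg : ∀ i, Integrable (g i) μ) {B : ℝ} (hB : ∀ᵐ ω ∂μ, ∑ i, g i ω ≤ B) :
    ∑ i, ∫ ω, g i ω ∂μ ≤ B := by
  rw [← integral_finsetSum _ fun i _ => hg i]
  calc ∫ ω, ∑ i, g i ω ∂μ ≤ ∫ _, B ∂μ :=
        integral_mono_ae (integrable_finsetSum _ fun i _ => hg i) (integrable_const B) hB
    _ = B := by simp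

lemma integrable_mul_of_sum_sq_le_one (hY : Measurable Y)
    (hb : ∀ᵐ ω ∂μ, ∑ a, Y ω a ^ 2 ≤ 1) (a b : α) :
    Integrable (fun ω => Y ω a * Y ω b) μ := by
  refine .of_bound (((measurable_pi_apply a).comp hY).mul
    ((measurable_pi_apply b).comp hY)).aestronglyMeasurable 1 ?_
  filter_upwards [hb] with ω h
  exact abs_mul_le_one_of_sum_sq_le_one h a b

lemma sum_sum_mul_integral_mul_le (hY : Measurable Y) (hb : ∀ᵐ ω ∂μ, ∑ a, Y ω a ^ 2 ≤ 1)
    (D : α → ℝ) :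
    ∑ a, ∑ b, D a * μ[fun ω => Y ω a * Y ω b] * D b ≤ ∑ a, D a ^ 2 := by
  have hterm : ∀ a b, D a * μ[fun ω => Y ω a * Y ω b] * D b =
      ∫ ω, D a * D b * (Y ω a * Y ω b) ∂μ := fun a b => by rw [integral_const_mul]; ring
  simp_rw [hterm]
  rw [← Fintype.sum_prod_type' (f := fun a b => ∫ ω, D a * D b * (Y ω a * Y ω b) ∂μ)]
  refine sum_integral_le_of_ae_sum_le
    (fun p : α × α => (integrable_mul_of_sum_sq_le_one hY hb p.1 p.2).const_mul _) ?_
  filter_upwards [hb] with ω h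
  have hsq : ∑ p : α × α, D p.1 * D p.2 * (Y ω p.1 * Y ω p.2) = (∑ a, Y ω a * D a) ^ 2 := by
    rw [Fintype.sum_prod_type, sq, Finset.sum_mul_sum]
    exact Finset.sum_congr rfl fun a _ => Finset.sum_congr rfl fun b _ => by ring
  rw [hsq]
  calc (∑ a, Y ω a * D a) ^ 2 ≤ (∑ a, Y ω a ^ 2) * ∑ a, D a ^ 2 :=
        Finset.sum_mul_sq_le_sq_mul_sq _ _ _
    _ ≤ ∑ a, D a ^ 2 :=
        mul_le_of_le_one_left (Finset.sum_nonneg fun a _ => sq_nonneg _) h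

lemma sum_sum_variance_mul_le_one (hY : Measurable Y) (hb : ∀ᵐ ω ∂μ, ∑ a, Y ω a ^ 2 ≤ 1) :
    ∑ a, ∑ b, variance (fun ω => Y ω a * Y ω b) μ ≤ 1 := by
  have hmeas : ∀ a b, Measurable fun ω => Y ω a * Y ω b := fun a b =>
    ((measurable_pi_apply a).comp hY).mul ((measurable_pi_apply b).comp hY)
  have hint : ∀ p : α × α, Integrable (fun ω => (Y ω p.1 * Y ω p.2) ^ 2) μ := by
    refine fun p => .of_bound ((hmeas p.1 p.2).pow_const 2).aestronglyMeasurable 1 ?_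
    filter_upwards [hb] with ω h
    rw [Real.norm_eq_abs, abs_pow, sq_le_one_iff₀ (abs_nonneg _)]
    exact abs_mul_le_one_of_sum_sq_le_one h p.1 p.2
  calc ∑ a, ∑ b, variance (fun ω => Y ω a * Y ω b) μ
      ≤ ∑ p : α × α, ∫ ω, (Y ω p.1 * Y ω p.2) ^ 2 ∂μ := by
        rw [Fintype.sum_prod_type]
        exact Finset.sum_le_sum fun a _ => Finset.sum_le_sum fun b _ =>
          variance_le_expectation_sq (hmeas a b).aestronglyMeasurable
    _ ≤ 1 := by
        refine sum_integral_le_of_ae_sum_le hint ?_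
        filter_upwards [hb] with ω h
        have hsq : ∑ p : α × α, (Y ω p.1 * Y ω p.2) ^ 2 = (∑ a, Y ω a ^ 2) ^ 2 := by
          rw [Fintype.sum_prod_type, sq (∑ a, Y ω a ^ 2), Finset.sum_mul_sum]
          simp_rw [mul_pow]
        rw [hsq]
        exact pow_le_one₀ (Finset.sum_nonneg fun a _ => sq_nonneg _) h

end SecondMoment

section GramConcentration

variable {Ω : Type*} [MeasurableSpace Ω] {μ : Measure Ω} [IsProbabilityMeasure μ]
  {ι α : Type*} [Fintype ι] [Fintype α] {Y : ι → Ω → α → ℝ}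

lemma le_measureReal_forall_abs_gram_sub_le (hY : ∀ i, Measurable (Y i))
    (hind : iIndepFun Y μ) (hid : ∀ i j, IdentDistrib (Y i) (Y j) μ μ)
    (hb : ∀ i, ∀ᵐ ω ∂μ, ∑ a, Y i ω a ^ 2 ≤ 1) (i₀ : ι) {θ : α → α → ℝ} {κ : ℝ} (hκ : 0 < κ)
    (hκθ : ∀ a b, 4 * κ ≤ θ a b)
    (hκσ : ∀ a b, 4 * variance (fun ω => Y i₀ ω a * Y i₀ ω b) μ * κ ≤ θ a b ^ 2) :
    1 - 2 * Fintype.card α ^ 2 * exp (-(Fintype.card ι * κ)) ≤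
      μ.real {ω | ∀ a b, |∑ i, Y i ω a * Y i ω b -
        Fintype.card ι * μ[fun ω => Y i₀ ω a * Y i₀ ω b]| ≤ Fintype.card ι * θ a b} := by
  set good := {ω | ∀ a b, |∑ i, Y i ω a * Y i ω b -
    Fintype.card ι * μ[fun ω => Y i₀ ω a * Y i₀ ω b]| ≤ Fintype.card ι * θ a b}
  set bad : α × α → Set Ω := fun p => {ω | Fintype.card ι * θ p.1 p.2 ≤
    |∑ i, Y i ω p.1 * Y i ω p.2 - Fintype.card ι * μ[fun ω => Y i₀ ω p.1 * Y i₀ ω p.2]|}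
  have hcover : goodᶜ ⊆ ⋃ p, bad p := by
    intro ω hω
    simp only [good, Set.mem_compl_iff, Set.mem_ofPred_eq, not_forall, not_le] at hω
    obtain ⟨a, b, h⟩ := hω
    exact Set.mem_iUnion.2 ⟨(a, b), h.le⟩
  have hbad : ∀ p, μ.real (bad p) ≤ 2 * exp (-(Fintype.card ι * κ)) := fun p =>
    measureReal_le_abs_sum_sub_le_two_mul_exp hY hind hid (f := fun y => y p.1 * y p.2)
      ((measurable_pi_apply _).mul (measurable_pi_apply _))
      (fun i => by filter_upwards [hb i] with ω h using abs_mul_le_one_of_sum_sq_le_one h _ _)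
      i₀ (by linarith [hκθ p.1 p.2]) (hκθ p.1 p.2) (hκσ p.1 p.2)
  have htotal : 1 ≤ μ.real good + μ.real goodᶜ := by
    simpa using measureReal_union_le (μ := μ) good goodᶜ
  have hbad_total : μ.real goodᶜ ≤ 2 * Fintype.card α ^ 2 * exp (-(Fintype.card ι * κ)) :=
    calc μ.real goodᶜ ≤ μ.real (⋃ p, bad p) := measureReal_mono hcover
      _ ≤ ∑ p, μ.real (bad p) := measureReal_iUnion_fintype_le _
      _ ≤ ∑ _p : α × α, 2 * exp (-(Fintype.card ι * κ)) := Finset.sum_le_sum fun p _ => hbad p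
      _ = 2 * Fintype.card α ^ 2 * exp (-(Fintype.card ι * κ)) := by
          simp only [Finset.sum_const, Finset.card_univ, Fintype.card_prod, nsmul_eq_mul]
          push_cast; ring
  linarith

end GramConcentration

section Rates

/-- `rscRate α₀ N ^ 2` is the constant `C(d₁, d₂)` of the statement, for `N = d₁ d₂`. -/
def rscRate (α₀ N : ℝ) : ℝ := √(α₀ / (4 * √N) + 1) - 1

lemma rscRate_pos {α₀ N : ℝ} (hα₀ : 0 < α₀) (hN : 0 < N) : 0 < rscRate α₀ N := by
  have : 1 < √(α₀ / (4 * √N) + 1) := by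
    rw [Real.lt_sqrt zero_le_one]; have : 0 < α₀ / (4 * √N) := by positivity
    linarith
  unfold rscRate; linarith

lemma rscRate_mul_sqrt_le {α₀ N : ℝ} (hα₀ : 0 < α₀) (hN : 0 < N) :
    rscRate α₀ N * √N ≤ α₀ / 8 := by
  have hs : 0 < √N := Real.sqrt_pos.2 hN
  have hquad : rscRate α₀ N ^ 2 + 2 * rscRate α₀ N = α₀ / (4 * √N) := by
    have := Real.sq_sqrt (show 0 ≤ α₀ / (4 * √N) + 1 by positivity)
    unfold rscRate; linear_combination this
  have : 2 * rscRate α₀ N * √N ≤ α₀ / (4 * √N) * √N := by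
    gcongr; nlinarith
  have hcancel : α₀ / (4 * √N) * √N = α₀ / 4 := by field_simp
  linarith

lemma two_mul_sq_mul_exp_le {N n u : ℝ} (hN : 1 ≤ N) (h : 2 * log (N ^ 2 + N) ≤ n * u ^ 2) :
    2 * N ^ 2 * exp (-(n * (5 / 4 * u ^ 2))) ≤ exp (-(n * u ^ 2) / 4) := by
  have hexp : (N ^ 2 + N) ^ 2 ≤ exp (n * u ^ 2) := by
    calc (N ^ 2 + N) ^ 2 = exp (2 * log (N ^ 2 + N)) := by
          rw [mul_comm, exp_mul, exp_log (by positivity), rpow_two]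
      _ ≤ exp (n * u ^ 2) := exp_le_exp.mpr h
  calc 2 * N ^ 2 * exp (-(n * (5 / 4 * u ^ 2)))
      ≤ exp (n * u ^ 2) * exp (-(n * (5 / 4 * u ^ 2))) := by gcongr; nlinarith
    _ = exp (-(n * u ^ 2) / 4) := by rw [← exp_add]; ring_nf

/-- The constants make `5 u ^ 2 ≤ θ` and `5 u ^ 2 v ≤ θ ^ 2`, i.e. a Bernstein exponent of at least
`5 u ^ 2 / 4` per sample, while keeping `Σ θ ^ 2 ≤ α₀ ^ 2 / 4`. -/
def bernsteinThreshold (u v : ℝ) : ℝ := 9 / 4 * u * √v + 5 * u ^ 2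

lemma five_mul_sq_le_bernsteinThreshold {u : ℝ} (hu : 0 ≤ u) (v : ℝ) :
    5 * u ^ 2 ≤ bernsteinThreshold u v := by
  unfold bernsteinThreshold; have : 0 ≤ 9 / 4 * u * √v := by positivity
  linarith

lemma five_mul_sq_mul_le_bernsteinThreshold_sq {u v : ℝ} (hu : 0 ≤ u) (hv : 0 ≤ v) :
    5 * u ^ 2 * v ≤ bernsteinThreshold u v ^ 2 := by
  unfold bernsteinThreshold
  have := Real.sq_sqrt hv
  have : 0 ≤ 9 / 4 * u * √v := by positivity
  nlinarith

lemma bernsteinThreshold_sq_le {u v : ℝ} (hv : 0 ≤ v) :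
    bernsteinThreshold u v ^ 2 ≤ 81 / 8 * u ^ 2 * v + 50 * u ^ 4 := by
  unfold bernsteinThreshold
  nlinarith [Real.sq_sqrt hv, sq_nonneg (9 / 4 * u * √v - 5 * u ^ 2)]

lemma sqrt_sum_sum_bernsteinThreshold_sq_le {α : Type*} [Fintype α] [Nonempty α]
    {v : α → α → ℝ} (hv₀ : ∀ a b, 0 ≤ v a b) (hv : ∑ a, ∑ b, v a b ≤ 1) {u α₀ : ℝ}
    (hu : 0 < u) (hus : u * √(Fintype.card α) ≤ α₀ / 8) (hα₀ : α₀ ≤ 1) :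
    √(∑ a, ∑ b, bernsteinThreshold u (v a b) ^ 2) ≤ α₀ / 2 := by
  set N : ℝ := (Fintype.card α : ℝ)
  have hN : 1 ≤ √N := Real.one_le_sqrt.2 (Nat.one_le_cast.2 Fintype.card_pos)
  have hsum : ∑ a, ∑ b, bernsteinThreshold u (v a b) ^ 2 ≤ 81 / 8 * u ^ 2 + 50 * (u * √N) ^ 4 :=
    calc ∑ a, ∑ b, bernsteinThreshold u (v a b) ^ 2
        ≤ ∑ a, ∑ b, (81 / 8 * u ^ 2 * v a b + 50 * u ^ 4) :=
          Finset.sum_le_sum fun a _ => Finset.sum_le_sum fun b _ =>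
            bernsteinThreshold_sq_le (hv₀ a b)
      _ = 81 / 8 * u ^ 2 * ∑ a, ∑ b, v a b + 50 * u ^ 4 * N ^ 2 := by
          simp only [Finset.sum_add_distrib, ← Finset.mul_sum, Finset.sum_const,
            Finset.card_univ, nsmul_eq_mul]
          ring
      _ ≤ 81 / 8 * u ^ 2 + 50 * (u * √N) ^ 4 := by
          have hN4 : √N ^ 4 = N ^ 2 := by
            rw [show √N ^ 4 = (√N ^ 2) ^ 2 by ring, Real.sq_sqrt (Nat.cast_nonneg _)]
          rw [mul_pow, hN4]
          nlinarith [sq_nonneg u]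
  have hu8 : u ≤ α₀ / 8 := le_trans (le_mul_of_one_le_right hu.le hN) hus
  have hα₀pos : 0 < α₀ := by linarith
  rw [Real.sqrt_le_left (by linarith)]
  refine hsum.trans ?_
  have h1 : u ^ 2 ≤ (α₀ / 8) ^ 2 := pow_le_pow_left₀ hu.le hu8 2
  have h2 : (u * √N) ^ 4 ≤ (α₀ / 8) ^ 4 := pow_le_pow_left₀ (by positivity) hus 4
  have h3 : α₀ ^ 4 ≤ α₀ ^ 2 := pow_le_pow_of_le_one hα₀pos.le hα₀ (by norm_num)
  nlinarith

end Rates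

theorem le_measureReal_forall_restricted_sum_sq_ge {Ω : Type*} [MeasurableSpace Ω]
    {μ : Measure Ω} [IsProbabilityMeasure μ] {ι α : Type*} [Fintype ι] [Fintype α] [Nonempty α]
    {Y : ι → Ω → α → ℝ} (hY : ∀ i, Measurable (Y i)) (hind : iIndepFun Y μ)
    (hid : ∀ i j, IdentDistrib (Y i) (Y j) μ μ) (hb : ∀ i, ∀ᵐ ω ∂μ, ∑ a, Y i ω a ^ 2 ≤ 1)
    (i₀ : ι) {Sig : α → α → ℝ} (hSig : ∀ a b, Sig a b = ∫ ω, Y i₀ ω a * Y i₀ ω b ∂μ)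
    {C : Set (α → ℝ)} {α₀ : ℝ} (hα₀ : 0 < α₀)
    (hRE : ∀ D ∈ C, α₀ * ∑ a, D a ^ 2 ≤ ∑ a, ∑ b, D a * Sig a b * D b)
    (hn : 2 * log ((Fintype.card α : ℝ) ^ 2 + Fintype.card α) /
      rscRate α₀ (Fintype.card α) ^ 2 ≤ Fintype.card ι) :
    1 - exp (-(Fintype.card ι * rscRate α₀ (Fintype.card α) ^ 2) / 4) ≤
      μ.real {ω | ∀ D ∈ C, α₀ / 4 * ∑ a, D a ^ 2 ≤
        1 / (2 * Fintype.card ι) * ∑ i, (∑ a, Y i ω a * D a) ^ 2} := by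
  set N : ℝ := (Fintype.card α : ℝ)
  set n : ℝ := (Fintype.card ι : ℝ)
  set u := rscRate α₀ N
  have hN : 1 ≤ N := Nat.one_le_cast.2 Fintype.card_pos
  have hn₀ : 0 < n := Nat.cast_pos.2 (Fintype.card_pos_iff.2 ⟨i₀⟩)
  have hu : 0 < u := rscRate_pos hα₀ (by linarith)
  set v := fun a b => variance (fun ω => Y i₀ ω a * Y i₀ ω b) μ
  have hgood := le_measureReal_forall_abs_gram_sub_le hY hind hid hb i₀
    (θ := fun a b => bernsteinThreshold u (v a b)) (κ := 5 / 4 * u ^ 2) (by positivity)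
    (fun a b => by linarith [five_mul_sq_le_bernsteinThreshold hu.le (v a b)])
    (fun a b => by
      linarith [five_mul_sq_mul_le_bernsteinThreshold_sq hu.le (variance_nonneg _ _ : 0 ≤ v a b)])
  have htail := two_mul_sq_mul_exp_le hN ((div_le_iff₀ (by positivity)).1 hn)
  refine le_trans (by linarith) (hgood.trans (measureReal_mono fun ω hω D hD => ?_))
  have hG : ∀ a b, |∑ i, Y i ω a * Y i ω b - n * Sig a b| ≤ n * bernsteinThreshold u (v a b) :=
    fun a b => by rw [hSig]; exact hω a b
  have hD₀ : 0 ≤ ∑ a, D a ^ 2 := Finset.sum_nonneg fun a _ => sq_nonneg _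
  suffices n * α₀ / 2 * ∑ a, D a ^ 2 ≤ ∑ i, (∑ a, Y i ω a * D a) ^ 2 by
    field_simp; linarith
  rcases hD₀.eq_or_lt with hzero | hpos
  · rw [← hzero, mul_zero]; exact Finset.sum_nonneg fun i _ => sq_nonneg _
  have hα₁ : α₀ ≤ 1 := by
    have hSigD : ∑ a, ∑ b, D a * Sig a b * D b ≤ ∑ a, D a ^ 2 := by
      simpa only [hSig] using sum_sum_mul_integral_mul_le (hY i₀) (hb i₀) D
    nlinarith [hRE D hD]
  have hθ := sqrt_sum_sum_bernsteinThreshold_sq_le (v := v) (fun a b => variance_nonneg _ μ)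
    (sum_sum_variance_mul_le_one (hY i₀) (hb i₀)) hu (rscRate_mul_sqrt_le hα₀ (by linarith)) hα₁
  have := sum_sq_sum_mul_ge hn₀.le hG hθ D
  nlinarith [hRE D hD]

theorem matrix_rsc_condition_general
    {d1 d2 : ℕ} (hd1 : 0 < d1) (hd2 : 0 < d2)
    {Ω : Type*} [MeasurableSpace Ω] (μ : Measure Ω) [IsProbabilityMeasure μ]
    (T0 : ℕ) (hT0 : 0 < T0)
    (X : Fin T0 → Ω → Matrix (Fin d1) (Fin d2) ℝ)
    (hX_meas : ∀ i, Measurable (X i))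
    -- i.i.d. context matrices:
    (hX_indep : iIndepFun X μ)
    (hX_ident : ∀ i j, IdentDistrib (X i) (X j) μ μ)
    (hX_bound : ∀ i, ∀ᵐ ω ∂μ, frobNorm (X i ω) ≤ 1)
    (PbarPerp Pbar : Matrix (Fin d1) (Fin d2) ℝ → Matrix (Fin d1) (Fin d2) ℝ)
    -- the vectorized population Gram matrix:
    (Sig : Matrix (Fin d1 × Fin d2) (Fin d1 × Fin d2) ℝ)
    (hSig : ∀ a b, Sig a b = ∫ ω, X ⟨0, hT0⟩ ω a.1 a.2 * X ⟨0, hT0⟩ ω b.1 b.2 ∂μ)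
    -- restricted eigenvalue condition on the cone ℂ:
    (α0 : ℝ) (hα0 : 0 < α0)
    (hRE : ∀ Δ : Matrix (Fin d1) (Fin d2) ℝ,
      nucNorm (PbarPerp Δ) ≤ 3 * nucNorm (Pbar Δ) →
      α0 * ∑ i, ∑ j, (Δ i j) ^ 2 ≤
        ∑ a : Fin d1 × Fin d2, ∑ b : Fin d1 × Fin d2, Δ a.1 a.2 * Sig a b * Δ b.1 b.2)
    -- T0 large enough:
    (hT0_big : 2 * Real.log ((d1 : ℝ) ^ 2 * (d2 : ℝ) ^ 2 + d1 * d2) /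
      ((Real.sqrt (α0 / (4 * Real.sqrt (d1 * d2)) + 1) - 1) ^ 2) ≤ (T0 : ℝ)) :
    1 - Real.exp (-((T0 : ℝ) *
        (Real.sqrt (α0 / (4 * Real.sqrt (d1 * d2)) + 1) - 1) ^ 2) / 4) ≤
      (μ {ω | ∀ Δ : Matrix (Fin d1) (Fin d2) ℝ,
        nucNorm (PbarPerp Δ) ≤ 3 * nucNorm (Pbar Δ) →
        (α0 / 4) * ∑ i, ∑ j, (Δ i j) ^ 2 ≤
          (1 / (2 * (T0 : ℝ))) * ∑ i, (frobInner (X i ω) Δ) ^ 2}).toReal := by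
  have : Nonempty (Fin d1 × Fin d2) := ⟨(⟨0, hd1⟩, ⟨0, hd2⟩)⟩
  let vec : Matrix (Fin d1) (Fin d2) ℝ → Fin d1 × Fin d2 → ℝ := fun M a => M a.1 a.2
  have hvec : Measurable vec := measurable_pi_lambda _ fun a =>
    (measurable_pi_apply a.2).comp (measurable_pi_apply a.1)
  have hcard : (Fintype.card (Fin d1 × Fin d2) : ℝ) = d1 * d2 := by simp
  have key := le_measureReal_forall_restricted_sum_sq_ge (Y := fun i => vec ∘ X i)
    (fun i => hvec.comp (hX_meas i)) (hX_indep.comp _ fun _ => hvec)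
    (fun i j => (hX_ident i j).comp hvec)
    (fun i => by
      filter_upwards [hX_bound i] with ω h
      simpa [vec, frobNorm, Fintype.sum_prod_type] using h)
    ⟨0, hT0⟩ hSig (C := vec '' {Δ | nucNorm (PbarPerp Δ) ≤ 3 * nucNorm (Pbar Δ)}) hα0
    (by rintro _ ⟨Δ, hΔ, rfl⟩; simpa [vec, Fintype.sum_prod_type] using hRE Δ hΔ)
    (by rw [hcard, Fintype.card_fin, mul_pow]; exact hT0_big)
  rw [hcard, Fintype.card_fin] at key
  refine key.trans (measureReal_mono fun ω hω Δ hΔ => ?_)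
  simpa [vec, frobInner, Fintype.sum_prod_type] using hω _ ⟨Δ, hΔ, rfl⟩

theorem matrix_rsc_condition
    {d1 d2 : ℕ} (hd1 : 0 < d1) (hd2 : 0 < d2)
    {Ω : Type*} [MeasurableSpace Ω] (μ : Measure Ω) [IsProbabilityMeasure μ]
    (T0 : ℕ) (hT0 : 0 < T0)
    (X : Fin T0 → Ω → Matrix (Fin d1) (Fin d2) ℝ)
    (hX_meas : ∀ i, Measurable (X i))
    -- i.i.d. context matrices:
    (hX_indep : iIndepFun X μ)
    (hX_ident : ∀ i j, IdentDistrib (X i) (X j) μ μ)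
    (hX_bound : ∀ i, ∀ᵐ ω ∂μ, frobNorm (X i ω) ≤ 1)
    -- the target matrix of rank r:
    (Θstar : Matrix (Fin d1) (Fin d2) ℝ) (r : ℕ) (hrank : Θstar.rank = r)
    -- PbarPerp and Pbar are the trace-orthogonal projections onto M̄⊥ and onto
    -- its orthogonal complement M̄:
    (PbarPerp Pbar : Matrix (Fin d1) (Fin d2) ℝ → Matrix (Fin d1) (Fin d2) ℝ)
    (hPbarPerp : ∀ Δ, PbarPerp Δ ∈ MbarPerp Θstar ∧
      ∀ W ∈ MbarPerp Θstar, frobInner (Δ - PbarPerp Δ) W = 0)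
    (hPbar : ∀ Δ, (∀ W ∈ MbarPerp Θstar, frobInner (Pbar Δ) W = 0) ∧
      ∀ W : Matrix (Fin d1) (Fin d2) ℝ,
        (∀ W' ∈ MbarPerp Θstar, frobInner W W' = 0) → frobInner (Δ - Pbar Δ) W = 0)
    -- the vectorized population Gram matrix:
    (Sig : Matrix (Fin d1 × Fin d2) (Fin d1 × Fin d2) ℝ)
    (hSig : ∀ a b, Sig a b = ∫ ω, X ⟨0, hT0⟩ ω a.1 a.2 * X ⟨0, hT0⟩ ω b.1 b.2 ∂μ)
    -- restricted eigenvalue condition on the cone ℂ: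
    (α0 : ℝ) (hα0 : 0 < α0)
    (hRE : ∀ Δ : Matrix (Fin d1) (Fin d2) ℝ,
      nucNorm (PbarPerp Δ) ≤ 3 * nucNorm (Pbar Δ) →
      α0 * ∑ i, ∑ j, (Δ i j) ^ 2 ≤
        ∑ a : Fin d1 × Fin d2, ∑ b : Fin d1 × Fin d2, Δ a.1 a.2 * Sig a b * Δ b.1 b.2)
    -- T0 large enough:
    (hT0_big : 2 * Real.log ((d1 : ℝ) ^ 2 * (d2 : ℝ) ^ 2 + d1 * d2) /
      ((Real.sqrt (α0 / (4 * Real.sqrt (d1 * d2)) + 1) - 1) ^ 2) ≤ (T0 : ℝ)) :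
    1 - Real.exp (-((T0 : ℝ) *
        (Real.sqrt (α0 / (4 * Real.sqrt (d1 * d2)) + 1) - 1) ^ 2) / 4) ≤
      (μ {ω | ∀ Δ : Matrix (Fin d1) (Fin d2) ℝ,
        nucNorm (PbarPerp Δ) ≤ 3 * nucNorm (Pbar Δ) →
        (α0 / 4) * ∑ i, ∑ j, (Δ i j) ^ 2 ≤
          (1 / (2 * (T0 : ℝ))) * ∑ i, (frobInner (X i ω) Δ) ^ 2}).toReal :=
  matrix_rsc_condition_general hd1 hd2 μ T0 hT0 X hX_meas hX_indep hX_ident hX_bound PbarPerp Pbar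
    Sig hSig α0 hα0 hRE hT0_big
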